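/- arXiv:2407.12123 — 8 statements merged into one kernel-verified Lean document; each statement's English description precedes it below -/
import Mathlib

section
/- Let p > 0, q > 0 and I⁰ ∈ [0,1). If f : [0,∞) → ℝ satisfies f' = (1−f)(p+qf²) with f(0) = I⁰, then for all t ≥ 0, f(t) satisfies the implicit relation (p+q)t = √(q/p)·( arctan(√(q/p)·f(t)) − arctan(√(q/p)·I⁰) ) + log((1−I⁰)/(1−f(t))) + (1/2)·log((p+q·f(t)²)/(p+q·(I⁰)²)). -/
open Real Set MeasureTheory intervalIntegral

/-- Implicit solution formula for the Bass/SI model on infinite complete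
3-body hypernetworks. -/
theorem stmt2 (p q I0 : ℝ) (hp : 0 < p) (hq : 0 < q) (hI0 : I0 ∈ Set.Ico (0:ℝ) 1)
    (f : ℝ → ℝ)
    (hode : ∀ t ∈ Set.Ici (0:ℝ),
      HasDerivWithinAt f ((1 - f t) * (p + q * (f t) ^ 2)) (Set.Ici 0) t)
    (h0 : f 0 = I0) :
    ∀ t ∈ Set.Ici (0:ℝ),
      (p + q) * t =
        Real.sqrt (q / p) *
            (Real.arctan (Real.sqrt (q / p) * f t) - Real.arctan (Real.sqrt (q / p) * I0))
          + Real.log ((1 - I0) / (1 - f t))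
          + (1 / 2) * Real.log ((p + q * (f t) ^ 2) / (p + q * I0 ^ 2)) := by
  obtain ⟨hI0a, hI0b⟩ := hI0
  have hfc : ContinuousOn f (Ici 0) := fun t ht => (hode t ht).continuousWithinAt
  set c : ℝ → ℝ := fun s => p + q * f s ^ 2 with hcdef
  have hcc : ContinuousOn c (Ici 0) :=
    continuousOn_const.add (continuousOn_const.mul (hfc.pow 2))
  have hcpos : ∀ x : ℝ, 0 < p + q * x ^ 2 := fun x => by positivity
  -- Barrier: f stays below 1
  have hlt1 : ∀ t ∈ Ici (0:ℝ), f t < 1 := by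
    intro T hT
    have hT0 : (0:ℝ) ≤ T := hT
    set F : ℝ → ℝ := fun t => ∫ s in (0:ℝ)..t, c s with hFdef
    have huicc : uIcc (0:ℝ) T = Icc 0 T := uIcc_of_le hT0
    have hFT : ContinuousOn F (Icc 0 T) := by
      have hint : IntegrableOn c (uIcc 0 T) volume := by
        rw [huicc]
        exact (hcc.mono (Icc_subset_Ici_self)).integrableOn_compact isCompact_Icc
      simpa [huicc] using continuousOn_primitive_interval hint
    set u : ℝ → ℝ := fun t => (1 - f t) * Real.exp (F t) with hudef
    have hucont : ContinuousOn u (Icc 0 T) :=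
      (continuousOn_const.sub (hfc.mono Icc_subset_Ici_self)).mul
        (Real.continuous_exp.comp_continuousOn hFT)
    have huderiv : ∀ x ∈ Ico (0:ℝ) T, HasDerivWithinAt u 0 (Ici x) x := by
      intro x hx
      have hx0 : (0:ℝ) ≤ x := hx.1
      have hsub : Ici x ⊆ Ici (0:ℝ) := Ici_subset_Ici.2 hx0
      have hf' : HasDerivWithinAt f ((1 - f x) * c x) (Ici x) x :=
        (hode x hx0).mono hsub
      have hsub' : Ioi x ⊆ Ici (0:ℝ) := fun y hy => le_of_lt (lt_of_le_of_lt hx0 hy)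
      have hF' : HasDerivWithinAt F (c x) (Ici x) x := by
        refine integral_hasDerivWithinAt_right (t := Ioi x) ?_
          ((hcc.mono hsub').stronglyMeasurableAtFilter_nhdsWithin measurableSet_Ioi x)
          ((hcc x hx0).mono hsub')
        apply ContinuousOn.intervalIntegrable
        refine hcc.mono ?_
        rw [uIcc_of_le hx0]
        exact Icc_subset_Ici_self
      have hE : HasDerivWithinAt (fun t => Real.exp (F t)) (Real.exp (F x) * c x) (Ici x) x :=
        (Real.hasDerivAt_exp (F x)).comp_hasDerivWithinAt x hF'
      have h1f : HasDerivWithinAt (fun t => 1 - f t) (0 - (1 - f x) * c x) (Ici x) x :=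
        (hasDerivWithinAt_const x _ 1).sub hf'
      have := h1f.mul hE
      exact this.congr_deriv (by ring)
    have hconst := constant_of_has_deriv_right_zero hucont huderiv T (right_mem_Icc.2 hT0)
    have hu0 : u 0 = 1 - I0 := by
      simp [hudef, hFdef, h0]
    rw [hu0] at hconst
    have hval : (1 - f T) * Real.exp (F T) = 1 - I0 := hconst
    by_contra hcon
    push_neg at hcon
    have hmp := mul_nonpos_of_nonpos_of_nonneg
      (show 1 - f T ≤ 0 by linarith) (Real.exp_pos (F T)).le
    linarith
  -- The antiderivative φ
  set s : ℝ := Real.sqrt (q / p) with hsdef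
  have hs2 : s ^ 2 = q / p := Real.sq_sqrt (le_of_lt (div_pos hq hp))
  set φ : ℝ → ℝ := fun x =>
    s * (Real.arctan (s * x) - Real.arctan (s * I0)) +
      (Real.log (1 - I0) - Real.log (1 - x)) +
      (1 / 2) * (Real.log (p + q * x ^ 2) - Real.log (p + q * I0 ^ 2)) with hφdef
  have hφderiv : ∀ x : ℝ, x < 1 →
      HasDerivAt φ ((p + q) / ((1 - x) * (p + q * x ^ 2))) x := by
    intro x hx1
    have h1x : (0:ℝ) < 1 - x := by linarith
    have hpx : (0:ℝ) < p + q * x ^ 2 := hcpos x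
    have h1 : HasDerivAt (fun y => Real.arctan (s * y)) (1 / (1 + (s * x) ^ 2) * (s * 1)) x :=
      (Real.hasDerivAt_arctan (s * x)).comp x ((hasDerivAt_id x).const_mul s)
    have h2 : HasDerivAt (fun y => Real.log (1 - y)) ((1 - x)⁻¹ * (0 - 1)) x :=
      (Real.hasDerivAt_log h1x.ne').comp x ((hasDerivAt_const x 1).sub (hasDerivAt_id x))
    have h3 : HasDerivAt (fun y => Real.log (p + q * y ^ 2))
        ((p + q * x ^ 2)⁻¹ * (0 + q * ((2:ℕ) * x ^ 1))) x :=
      by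
        have h := (Real.hasDerivAt_log hpx.ne').comp x
          ((hasDerivAt_const x p).add ((hasDerivAt_pow 2 x).const_mul q))
        exact h.congr_deriv (by norm_num)
    have hD : HasDerivAt φ
        (s * (1 / (1 + (s * x) ^ 2) * (s * 1)) +
          (0 - (1 - x)⁻¹ * (0 - 1)) +
          (1 / 2) * ((p + q * x ^ 2)⁻¹ * (0 + q * ((2:ℕ) * x ^ 1)))) x := by
      exact (((h1.sub_const _).const_mul s).add ((hasDerivAt_const x _).sub h2)).add
        ((h3.sub_const _).const_mul (1 / 2))
    have key : s * (1 / (1 + (s * x) ^ 2) * (s * 1)) = q / (p + q * x ^ 2) := by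
      have h' : s * (1 / (1 + (s * x) ^ 2) * (s * 1)) = s ^ 2 / (1 + s ^ 2 * x ^ 2) := by
        rw [mul_pow]; ring
      rw [h', hs2]
      have hd1 : (1:ℝ) + q / p * x ^ 2 ≠ 0 := by positivity
      field_simp
    convert hD using 1
    rw [key]
    push_cast
    field_simp
    ring
  -- The function g = φ ∘ f − (p+q) t has zero right derivative
  set g : ℝ → ℝ := fun t => φ (f t) - (p + q) * t with hgdef
  have hgd : ∀ x ∈ Ici (0:ℝ), HasDerivWithinAt g 0 (Ici 0) x := by
    intro x hx
    have hfx1 : f x < 1 := hlt1 x hx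
    have hA : (0:ℝ) < (1 - f x) * (p + q * f x ^ 2) :=
      mul_pos (by linarith) (hcpos _)
    have hφd := (hφderiv (f x) hfx1).comp_hasDerivWithinAt x (hode x hx)
    have hlin : HasDerivWithinAt (fun t : ℝ => (p + q) * t) ((p + q) * 1) (Ici 0) x :=
      ((hasDerivAt_id x).const_mul (p + q)).hasDerivWithinAt
    have := hφd.sub hlin
    exact this.congr_deriv (by rw [div_mul_cancel₀ _ hA.ne']; ring)
  intro t ht
  have ht0 : (0:ℝ) ≤ t := ht
  have hgcont : ContinuousOn g (Icc 0 t) :=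
    fun x hx => ((hgd x hx.1).continuousWithinAt).mono Icc_subset_Ici_self
  have hconst := constant_of_has_deriv_right_zero hgcont
    (fun x hx => (hgd x hx.1).mono (Ici_subset_Ici.2 hx.1)) t (right_mem_Icc.2 ht0)
  have hg0 : g 0 = 0 := by
    simp [hgdef, hφdef, h0]
  rw [hg0] at hconst
  -- unfold and rewrite logs
  have hf1 : (0:ℝ) < 1 - f t := by
    have := hlt1 t ht
    linarith
  have h1I0 : (0:ℝ) < 1 - I0 := by linarith
  have hlog1 : Real.log ((1 - I0) / (1 - f t)) =
      Real.log (1 - I0) - Real.log (1 - f t) :=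
    Real.log_div h1I0.ne' hf1.ne'
  have hlog2 : Real.log ((p + q * f t ^ 2) / (p + q * I0 ^ 2)) =
      Real.log (p + q * f t ^ 2) - Real.log (p + q * I0 ^ 2) :=
    Real.log_div (hcpos _).ne' (hcpos _).ne'
  rw [hlog1, hlog2]
  have : φ (f t) - (p + q) * t = 0 := hconst
  simp only [hφdef] at this
  linarith
end

section
/- Let q > 0 and I⁰ ∈ (0,1). If f : [0,∞) → ℝ satisfies f' = (1−f)·q·f² with f(0) = I⁰, then for all t ≥ 0, q·t = log( (f(t)/(1−f(t))) · ((1−I⁰)/I⁰) ) + 1/I⁰ − 1/f(t). -/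
open Set Real

/-- A (right-)solution of a linear ODE `g' = a t * g t` with continuous coefficient
and positive initial value stays positive on `[0, T]`. -/
lemma lin_ode_pos {g a : ℝ → ℝ} {T : ℝ}
    (hg : ContinuousOn g (Set.Icc 0 T))
    (ha : ContinuousOn a (Set.Icc 0 T))
    (hd : ∀ t ∈ Set.Ioo 0 T, HasDerivAt g (a t * g t) t)
    (h0 : 0 < g 0) : ∀ t ∈ Set.Icc 0 T, 0 < g t := by
  by_contra hcon
  push_neg at hcon
  obtain ⟨t0, ht0, ht0'⟩ := hcon
  -- the set of "bad" times
  set S : Set ℝ := Set.Icc 0 T ∩ g ⁻¹' Set.Iic 0 with hS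
  have hSclosed : IsClosed S := hg.preimage_isClosed_of_isClosed isClosed_Icc isClosed_Iic
  have hSne : S.Nonempty := ⟨t0, ht0, ht0'⟩
  have hSbdd : BddBelow S := ⟨0, fun x hx => hx.1.1⟩
  set t1 := sInf S with ht1def
  have ht1S : t1 ∈ S := hSclosed.csInf_mem hSne hSbdd
  have ht1T : t1 ≤ T := ht1S.1.2
  have ht1nonneg : (0:ℝ) ≤ t1 := ht1S.1.1
  have ht1pos : 0 < t1 := by
    rcases lt_or_eq_of_le ht1nonneg with h | h
    · exact h
    · exfalso; have := ht1S.2; rw [← h] at this; simp only [Set.mem_preimage, Set.mem_Iic] at this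
      linarith
  have hpos_before : ∀ s ∈ Set.Ico (0:ℝ) t1, 0 < g s := by
    intro s hs
    by_contra hgs
    push_neg at hgs
    have hsS : s ∈ S := ⟨⟨hs.1, hs.2.le.trans ht1T⟩, hgs⟩
    exact absurd (csInf_le hSbdd hsS) (not_le.mpr hs.2)
  -- bound on the coefficient
  obtain ⟨K, hK⟩ := (isCompact_Icc).exists_bound_of_continuousOn ha
  have hKnn : 0 ≤ K := le_trans (norm_nonneg _) (hK 0 ⟨le_refl _, ht1nonneg.trans ht1T⟩)
  set u : ℝ → ℝ := fun s => g s * Real.exp (K * s) with hu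
  have hmono : MonotoneOn u (Set.Icc 0 t1) := by
    apply monotoneOn_of_deriv_nonneg (convex_Icc 0 t1)
    · exact (hg.mono (Set.Icc_subset_Icc le_rfl ht1T)).mul
        ((Real.continuous_exp.comp (continuous_const.mul continuous_id)).continuousOn)
    · rw [interior_Icc]
      intro s hs
      have hds : HasDerivAt g (a s * g s) s := hd s ⟨hs.1, lt_of_lt_of_le hs.2 ht1T⟩
      have : HasDerivAt u (a s * g s * Real.exp (K * s) + g s * (Real.exp (K * s) * K)) s := by
        exact hds.mul (((hasDerivAt_id s).const_mul K).exp.congr_deriv (by simp))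
      exact this.differentiableAt.differentiableWithinAt
    · rw [interior_Icc]
      intro s hs
      have hds : HasDerivAt g (a s * g s) s := hd s ⟨hs.1, lt_of_lt_of_le hs.2 ht1T⟩
      have hdu : HasDerivAt u (a s * g s * Real.exp (K * s) + g s * (Real.exp (K * s) * K)) s := by
        exact hds.mul (((hasDerivAt_id s).const_mul K).exp.congr_deriv (by simp))
      rw [hdu.deriv]
      have hgs : 0 < g s := hpos_before s ⟨hs.1.le, hs.2⟩
      have has : -K ≤ a s := by
        have := hK s ⟨hs.1.le, (hs.2.le.trans ht1T)⟩
        have := abs_le.mp (by simpa [Real.norm_eq_abs] using this)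
        linarith [this.1]
      have hexp : 0 < Real.exp (K * s) := Real.exp_pos _
      have key : 0 ≤ g s * Real.exp (K * s) * (a s + K) :=
        mul_nonneg (mul_nonneg hgs.le hexp.le) (by linarith)
      nlinarith [key]
  have h1 := hmono (Set.left_mem_Icc.mpr ht1pos.le) (Set.right_mem_Icc.mpr ht1pos.le) ht1pos.le
  have hgt1 : g t1 ≤ 0 := ht1S.2
  have : u t1 ≤ 0 := mul_nonpos_of_nonpos_of_nonneg hgt1 (Real.exp_pos _).le
  have : u 0 > 0 := by simp [hu, h0]
  simp only [hu] at h1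
  nlinarith [Real.exp_pos (K * (0:ℝ)), Real.exp_pos (K * t1)]

/-- Implicit solution formula for the SI model on infinite complete
3-body hypernetworks. -/
theorem stmt3 (q I0 : ℝ) (hq : 0 < q) (hI0 : I0 ∈ Set.Ioo (0:ℝ) 1)
    (f : ℝ → ℝ)
    (hode : ∀ t ∈ Set.Ici (0:ℝ),
      HasDerivWithinAt f ((1 - f t) * q * (f t) ^ 2) (Set.Ici 0) t)
    (h0 : f 0 = I0) :
    ∀ t ∈ Set.Ici (0:ℝ),
      q * t = Real.log ((f t / (1 - f t)) * ((1 - I0) / I0)) + 1 / I0 - 1 / f t := by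
  obtain ⟨hI0pos, hI0lt⟩ := hI0
  have hcont : ContinuousOn f (Set.Ici 0) := fun t ht => (hode t ht).continuousWithinAt
  -- at interior times the derivative is a true derivative
  have hdat : ∀ t : ℝ, 0 < t → HasDerivAt f ((1 - f t) * q * (f t) ^ 2) t := by
    intro t ht
    exact (hode t ht.le).hasDerivAt (Ici_mem_nhds ht)
  -- f stays in (0,1)
  have hrange : ∀ T : ℝ, 0 ≤ T → ∀ t ∈ Set.Icc (0:ℝ) T, 0 < f t ∧ f t < 1 := by
    intro T hT
    have hcT : ContinuousOn f (Set.Icc 0 T) := hcont.mono (Set.Icc_subset_Ici_self)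
    have hp : ∀ t ∈ Set.Icc (0:ℝ) T, 0 < f t := by
      apply lin_ode_pos hcT (a := fun t => (1 - f t) * q * f t)
      · exact ((continuousOn_const.sub hcT).mul continuousOn_const).mul hcT
      · intro t ht
        exact (hdat t ht.1).congr_deriv (by ring)
      · rw [h0]; exact hI0pos
    have hq1 : ∀ t ∈ Set.Icc (0:ℝ) T, 0 < 1 - f t := by
      apply lin_ode_pos (g := fun t => 1 - f t) (a := fun t => -(q * f t ^ 2))
      · exact continuousOn_const.sub hcT
      · exact (continuousOn_const.mul (hcT.pow 2)).neg
      · intro t ht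
        exact ((hdat t ht.1).const_sub 1).congr_deriv (by ring)
      · rw [h0]; linarith
    intro t ht
    exact ⟨hp t ht, by linarith [hq1 t ht]⟩
  intro t ht
  have htn : (0:ℝ) ≤ t := ht
  have hmem := hrange t htn
  -- the conserved quantity
  set G : ℝ → ℝ := fun s => Real.log (f s) - Real.log (1 - f s) - (f s)⁻¹ - q * s with hG
  have hconst : G t = G 0 := by
    have hcG : ContinuousOn G (Set.Icc 0 t) := by
      have hcT : ContinuousOn f (Set.Icc 0 t) := hcont.mono Set.Icc_subset_Ici_self
      apply ContinuousOn.sub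
      apply ContinuousOn.sub
      apply ContinuousOn.sub
      · exact hcT.log (fun s hs => (hmem s hs).1.ne')
      · exact (continuousOn_const.sub hcT).log (fun s hs => by
          have := (hmem s hs).2; intro h; simp only [Pi.sub_apply, sub_eq_zero] at h; exact absurd h.symm (ne_of_lt this))
      · exact hcT.inv₀ (fun s hs => (hmem s hs).1.ne')
      · exact (continuousOn_const.mul continuousOn_id)
    have hder : ∀ x ∈ Set.Ico (0:ℝ) t, HasDerivWithinAt G 0 (Set.Ici x) x := by
      intro x hx
      have hfx := hmem x ⟨hx.1, hx.2.le⟩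
      have hfx0 : f x ≠ 0 := hfx.1.ne'
      have hfx1 : (1:ℝ) - f x ≠ 0 := by intro h; rw [sub_eq_zero] at h; exact absurd h.symm (ne_of_lt hfx.2)
      set d := (1 - f x) * q * (f x) ^ 2 with hd
      have hf' : HasDerivWithinAt f d (Set.Ici x) x :=
        (hode x hx.1).mono (Set.Ici_subset_Ici.mpr hx.1)
      have h1 : HasDerivWithinAt (fun s => Real.log (f s)) (d / f x) (Set.Ici x) x :=
        hf'.log hfx0
      have h2 : HasDerivWithinAt (fun s => Real.log (1 - f s)) (-d / (1 - f x)) (Set.Ici x) x := by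
        have : HasDerivWithinAt (fun s => 1 - f s) (-d) (Set.Ici x) x :=
          (hasDerivWithinAt_const x _ (1:ℝ)).sub hf' |>.congr_deriv (by ring)
        exact this.log hfx1
      have h3 : HasDerivWithinAt (fun s => (f s)⁻¹) (-d / (f x) ^ 2) (Set.Ici x) x := hf'.inv hfx0
      have h4 : HasDerivWithinAt (fun s : ℝ => q * s) q (Set.Ici x) x := by
        simpa using (hasDerivWithinAt_id x (Set.Ici x)).const_mul q
      have h5 : HasDerivWithinAt G (d / f x - -d / (1 - f x) - -d / (f x) ^ 2 - q)
          (Set.Ici x) x := ((h1.sub h2).sub h3).sub h4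
      have hz : d / f x - -d / (1 - f x) - -d / (f x) ^ 2 - q = 0 := by
        rw [hd]; field_simp; ring
      rwa [hz] at h5
    exact constant_of_has_deriv_right_zero hcG hder t (Set.right_mem_Icc.mpr htn)
  -- unfold and rearrange
  have hft := hmem t (Set.right_mem_Icc.mpr htn)
  have hft1 : (0:ℝ) < 1 - f t := by linarith [hft.2]
  have hI01 : (0:ℝ) < 1 - I0 := by linarith
  simp only [hG, h0] at hconst
  rw [Real.log_mul (div_pos hft.1 hft1).ne' (div_pos hI01 hI0pos).ne', Real.log_div hft.1.ne' hft1.ne',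
    Real.log_div hI01.ne' hI0pos.ne']
  have h1f : (1:ℝ) / I0 = I0⁻¹ := one_div I0
  have h1ft : (1:ℝ) / f t = (f t)⁻¹ := one_div (f t)
  rw [h1f, h1ft]
  linarith [hconst]
end

section
/- Fix p > 0, q > 0, I⁰ ∈ [0,1), and a positive integer n. Suppose ([Sᵐ])_{m≥1} are differentiable functions satisfying the infinite system d[Sⁿ]/dt = −n(p+q)[Sⁿ] + nq(2[Sⁿ⁺¹] − [Sⁿ⁺²]) with [Sⁿ](0) = (1−I⁰)ⁿ. If [S](t) solves the scalar ODE d[S]/dt = −[S](p + q(1−[S])²) with [S](0) = 1−I⁰, then the functions [Sⁿ] := [S]ⁿ solve the infinite system. -/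
/-- Exact closure of the master equations on infinite complete 3-body
hypernetworks: if `[S]` solves `d[S]/dt = −[S](p+q(1−[S])²)` with
`[S](0) = 1−I⁰`, then `[Sⁿ] := [S]ⁿ` solves the infinite hierarchy. -/
theorem stmt9 (p q I0 : ℝ) (hp : 0 < p) (hq : 0 < q) (hI0 : I0 ∈ Set.Ico (0:ℝ) 1)
    (s : ℝ → ℝ)
    (hs : ∀ t, HasDerivAt s (-(s t) * (p + q * (1 - s t) ^ 2)) t)
    (h0 : s 0 = 1 - I0) :
    ∀ n : ℕ, 1 ≤ n →
      (∀ t, HasDerivAt (fun t => (s t) ^ n)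
          (-(n : ℝ) * (p + q) * (s t) ^ n
            + (n : ℝ) * q * (2 * (s t) ^ (n + 1) - (s t) ^ (n + 2))) t) ∧
      (s 0) ^ n = (1 - I0) ^ n := by
  intro n hn
  refine ⟨fun t => ?_, by rw [h0]⟩
  have h : HasDerivAt (fun t => s t ^ n) (↑n * s t ^ (n - 1) * (-s t * (p + q * (1 - s t) ^ 2))) t := (hs t).fun_pow n
  convert h using 1
  obtain ⟨m, rfl⟩ := Nat.exists_eq_add_of_le' hn
  simp only [Nat.add_sub_cancel_left, Nat.cast_add, Nat.add_sub_cancel]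
  ring
end

section
/- Let p > 0, q > 0, I⁰ ∈ [0,1), and set S⁰ = 1 − I⁰. Define f(t) = 1 − S⁰·exp( −(p+q)t + (q/(2p))·(1−e^{−pt})·(4 − S⁰ − S⁰e^{−pt})·S⁰ ). Then f solves df/dt = (p + q(1 − S⁰e^{−pt})²)(1 − f) with f(0) = I⁰. -/
/-- The explicit expected adoption level of the Bass/SI model on the infinite
3-body hyperline solves the non-autonomous linear ODE. -/
theorem stmt11 (p q I0 : ℝ) (hp : 0 < p) (hq : 0 < q) (hI0 : I0 ∈ Set.Ico (0:ℝ) 1)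
    (S0 : ℝ) (hS0 : S0 = 1 - I0)
    (f : ℝ → ℝ)
    (hf : ∀ t, f t = 1 - S0 * Real.exp (-(p + q) * t
      + (q / (2 * p)) * (1 - Real.exp (-p * t)) * (4 - S0 - S0 * Real.exp (-p * t)) * S0)) :
    (∀ t, HasDerivAt f ((p + q * (1 - S0 * Real.exp (-p * t)) ^ 2) * (1 - f t)) t) ∧
      f 0 = I0 := by
  have hfun : f = fun t => 1 - S0 * Real.exp (-(p + q) * t
      + (q / (2 * p)) * (1 - Real.exp (-p * t)) * (4 - S0 - S0 * Real.exp (-p * t)) * S0) :=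
    funext hf
  constructor
  · intro t
    have hE : HasDerivAt (fun s : ℝ => Real.exp (-p * s)) (Real.exp (-p * t) * (-p)) t := by
      simpa [mul_comm] using ((hasDerivAt_id t).const_mul (-p)).exp
    have h1 : HasDerivAt (fun s : ℝ => -(p + q) * s) (-(p + q)) t := by
      simpa using (hasDerivAt_id t).const_mul (-(p + q))
    have h2 : HasDerivAt (fun s : ℝ => 1 - Real.exp (-p * s))
        (-(Real.exp (-p * t) * (-p))) t := by
      simpa using hE.const_sub 1
    have h3 : HasDerivAt (fun s : ℝ => 4 - S0 - S0 * Real.exp (-p * s))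
        (-(S0 * (Real.exp (-p * t) * (-p)))) t := by
      simpa using (hE.const_mul S0).const_sub (4 - S0)
    have hg : HasDerivAt (fun s : ℝ => -(p + q) * s
        + (q / (2 * p)) * (1 - Real.exp (-p * s)) * (4 - S0 - S0 * Real.exp (-p * s)) * S0)
        (-(p + q) + ((q / (2 * p)) * (-(Real.exp (-p * t) * (-p)))
            * (4 - S0 - S0 * Real.exp (-p * t))
          + (q / (2 * p)) * (1 - Real.exp (-p * t))
            * (-(S0 * (Real.exp (-p * t) * (-p))))) * S0) t := by
      exact h1.add (((h2.const_mul (q / (2 * p))).mul h3).mul_const S0)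
    have hF := (hg.exp.const_mul S0).const_sub 1
    rw [hfun]
    refine hF.congr_deriv ?_
    have hp' : (2 : ℝ) * p ≠ 0 := by positivity
    field_simp
    ring
  · rw [hf 0]
    simp [hS0]
end

section
/- Let q > 0, I⁰ ∈ (0,1), S⁰ = 1 − I⁰, and define f(t) = 1 − S⁰·e^{−(1−S⁰)² q t}. Then f solves df/dt = q(1 − S⁰)²(1 − f) with f(0) = I⁰; moreover f is the pointwise limit as p → 0⁺ of the functions f_p(t) = 1 − S⁰·exp( −(p+q)t + (q/(2p))(1−e^{−pt})(4 − S⁰ − S⁰e^{−pt})S⁰ ). -/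
open Filter

/-- The SI model on the infinite 3-body hyperline: the explicit solution for
`p = 0`, and the fact that it is the `p → 0⁺` limit of the Bass/SI hyperline
solution. -/
theorem stmt12 (q I0 : ℝ) (hq : 0 < q) (hI0 : I0 ∈ Set.Ioo (0:ℝ) 1)
    (S0 : ℝ) (hS0 : S0 = 1 - I0)
    (f : ℝ → ℝ) (hf : ∀ t, f t = 1 - S0 * Real.exp (-(1 - S0) ^ 2 * q * t)) :
    (∀ t, HasDerivAt f (q * (1 - S0) ^ 2 * (1 - f t)) t) ∧
      f 0 = I0 ∧
      ∀ t : ℝ, Tendsto (fun p : ℝ =>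
          1 - S0 * Real.exp (-(p + q) * t
            + (q / (2 * p)) * (1 - Real.exp (-p * t)) * (4 - S0 - S0 * Real.exp (-p * t)) * S0))
        (nhdsWithin 0 (Set.Ioi 0)) (nhds (f t)) := by
  have hfe : f = fun t => 1 - S0 * Real.exp (-(1 - S0) ^ 2 * q * t) := funext hf
  refine ⟨?_, ?_, ?_⟩
  · intro t
    have h1 : HasDerivAt (fun t : ℝ => -(1 - S0) ^ 2 * q * t) (-(1 - S0) ^ 2 * q) t := by
      simpa only [mul_one, id_eq] using (hasDerivAt_id t).const_mul (-(1 - S0) ^ 2 * q)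
    have h2 := (Real.hasDerivAt_exp (-(1 - S0) ^ 2 * q * t)).comp t h1
    have h4 := (hasDerivAt_const t (1 : ℝ)).sub (h2.const_mul S0)
    rw [hfe]
    convert h4 using 1
    case e'_9 => beta_reduce; ring
    case e'_8 => funext x; simp [Function.comp_def]
    all_goals rfl
  · rw [hf 0, hS0]
    norm_num
  · intro t
    have hslope : Tendsto (fun p : ℝ => (1 - Real.exp (-p * t)) / p)
        (nhdsWithin 0 (Set.Ioi 0)) (nhds t) := by
      have hd : HasDerivAt (fun p : ℝ => 1 - Real.exp (-p * t)) t 0 := by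
        have h1 : HasDerivAt (fun p : ℝ => -p * t) (-t) 0 := by
          simpa using ((hasDerivAt_id (0 : ℝ)).neg.mul_const t)
        have h2 := (Real.hasDerivAt_exp ((-0 : ℝ) * t)).comp 0 h1
        have h3 := (hasDerivAt_const (0 : ℝ) (1 : ℝ)).sub h2
        simpa [Function.comp_def, Pi.sub_def] using h3
      have h := hasDerivAt_iff_tendsto_slope.mp hd
      have h' := h.mono_left (nhdsWithin_mono _ (fun x hx => ne_of_gt hx))
      refine h'.congr fun p => ?_
      simp [slope_def_field, div_eq_mul_inv]
    have hexp : Tendsto (fun p : ℝ => Real.exp (-p * t))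
        (nhdsWithin 0 (Set.Ioi 0)) (nhds 1) := by
      have : Continuous fun p : ℝ => Real.exp (-p * t) := by continuity
      have h := (this.tendsto 0).mono_left (nhdsWithin_le_nhds (s := Set.Ioi 0))
      simpa using h
    have hA : Tendsto (fun p : ℝ => -(p + q) * t)
        (nhdsWithin 0 (Set.Ioi 0)) (nhds (-(0 + q) * t)) := by
      have : Continuous fun p : ℝ => -(p + q) * t := by continuity
      exact (this.tendsto 0).mono_left nhdsWithin_le_nhds
    have hE : Tendsto (fun p : ℝ => -(p + q) * t
          + (q / (2 * p)) * (1 - Real.exp (-p * t)) * (4 - S0 - S0 * Real.exp (-p * t)) * S0)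
        (nhdsWithin 0 (Set.Ioi 0))
        (nhds (-(0 + q) * t + (q / 2) * t * (4 - S0 - S0 * 1) * S0)) := by
      have hB : Tendsto (fun p : ℝ =>
            (q / 2) * ((1 - Real.exp (-p * t)) / p) * (4 - S0 - S0 * Real.exp (-p * t)) * S0)
          (nhdsWithin 0 (Set.Ioi 0)) (nhds ((q / 2) * t * (4 - S0 - S0 * 1) * S0)) :=
        (((hslope.const_mul (q / 2)).mul
          (tendsto_const_nhds.sub (hexp.const_mul S0))).mul_const S0)
      have hAB := hA.add hB
      refine hAB.congr fun p => ?_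
      ring
    have hcomp := (Real.continuous_exp.tendsto _).comp hE
    have hone : Tendsto (fun _ : ℝ => (1 : ℝ)) (nhdsWithin 0 (Set.Ioi 0)) (nhds 1) :=
      tendsto_const_nhds
    have hfin := hone.sub (hcomp.const_mul S0)
    have : f t = 1 - S0 * Real.exp (-(0 + q) * t + (q / 2) * t * (4 - S0 - S0 * 1) * S0) := by
      rw [hf t]; ring_nf
    rw [this]
    exact hfin
end

section
/- Fix p ≥ 0, q > 0, I⁰ ∈ [0,1). Suppose functions ([Sⁿ])_{n≥1} satisfy d[Sⁿ]/dt = −(np + q)[Sⁿ] + q(2[Sⁿ⁺¹] − [Sⁿ⁺²]) with [Sⁿ](0) = (1−I⁰)ⁿ. If s(t) solves ds/dt = −(p + q(1 − e^{−pt}(1−I⁰))²)·s with s(0) = 1−I⁰, then the functions [Sⁿ](t) := e^{−(n−1)pt}(1−I⁰)^{n−1}·s(t) solve the infinite system. -/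
/-- Exact closure ansatz for the master equations of the Bass/SI model on the
infinite 3-body hyperline: `[Sⁿ](t) = e^{−(n−1)pt}(1−I⁰)^{n−1} s(t)` solves the
infinite hierarchy when `s` solves the scalar non-autonomous ODE. -/
theorem stmt13 (p q I0 : ℝ) (hp : 0 ≤ p) (hq : 0 < q) (hI0 : I0 ∈ Set.Ico (0:ℝ) 1)
    (s : ℝ → ℝ)
    (hs : ∀ t, HasDerivAt s
      (-(p + q * (1 - Real.exp (-p * t) * (1 - I0)) ^ 2) * s t) t)
    (h0 : s 0 = 1 - I0)
    (Sn : ℕ → ℝ → ℝ)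
    (hSn : ∀ n t, Sn n t = Real.exp (-((n : ℝ) - 1) * p * t) * (1 - I0) ^ (n - 1) * s t) :
    ∀ n : ℕ, 1 ≤ n →
      (∀ t, HasDerivAt (Sn n)
          (-((n : ℝ) * p + q) * Sn n t + q * (2 * Sn (n + 1) t - Sn (n + 2) t)) t) ∧
      Sn n 0 = (1 - I0) ^ n := by
  intro n hn
  obtain ⟨m, rfl⟩ : ∃ m, n = m + 1 := ⟨n - 1, (Nat.succ_pred_eq_of_pos hn).symm⟩
  have hfun : Sn (m + 1) = fun t => Real.exp (-(m : ℝ) * p * t) * (1 - I0) ^ m * s t := by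
    funext t
    rw [hSn]
    push_cast
    ring_nf
  constructor
  · intro t
    have h1 : HasDerivAt (fun t : ℝ => Real.exp (-(m : ℝ) * p * t))
        (-(m : ℝ) * p * Real.exp (-(m : ℝ) * p * t)) t := by
      simpa [Function.comp_def, mul_comm, mul_assoc, mul_left_comm] using
        (Real.hasDerivAt_exp (-(m : ℝ) * p * t)).comp t
        ((hasDerivAt_id t).const_mul (-(m : ℝ) * p))
    have h2 := (h1.mul_const ((1 - I0) ^ m)).mul (hs t)
    rw [hfun]
    refine h2.congr_deriv ?_
    simp only [hSn, Nat.add_sub_cancel]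
    push_cast
    have e1 : (-((m : ℝ) + 1 + 1 - 1) * p * t) = (-p * t) + (-(m : ℝ) * p * t) := by ring
    have e2 : (-((m : ℝ) + 1 + 2 - 1) * p * t) = (-p * t) + ((-p * t) + (-(m : ℝ) * p * t)) := by
      ring
    rw [e1, e2]
    simp only [Real.exp_add, pow_succ]
    ring
  · rw [hSn]
    simp [h0, pow_succ]
end

section
/- Let p > 0, q > 0 and let f solve f' = (1−f)(p+qf²), f(0) = 0. Then the unique time T with f(T) = 1/2 is T = (1/(p+q))·( √(q/p)·arctan((1/2)√(q/p)) + log(2√(1 + q/(4p))) ). -/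
open Real Set

noncomputable def Hbass (p q x : ℝ) : ℝ :=
  Real.sqrt (q / p) * Real.arctan (Real.sqrt (q / p) * x)
    - Real.log (1 - x) + (1 / 2) * Real.log (p + q * x ^ 2) - (1 / 2) * Real.log p

lemma Hbass_deriv (p q : ℝ) (hp : 0 < p) (hq : 0 < q) {x : ℝ} (hx : x < 1) :
    HasDerivAt (Hbass p q) ((p + q) / ((1 - x) * (p + q * x ^ 2))) x := by
  set a := Real.sqrt (q / p) with ha
  have ha2 : a ^ 2 = q / p := Real.sq_sqrt (le_of_lt (div_pos hq hp))
  have h1x : (1 : ℝ) - x ≠ 0 := by linarith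
  have hpx : 0 < p + q * x ^ 2 := by positivity
  have h1 : HasDerivAt (fun y => a * Real.arctan (a * y))
      (a * (1 / (1 + (a * x) ^ 2) * a)) x := by
    exact (((Real.hasDerivAt_arctan (a * x)).comp x
      ((hasDerivAt_id x).const_mul a |>.congr_deriv (by ring))).const_mul a)
  have h2 : HasDerivAt (fun y => Real.log (1 - y)) ((1 - x)⁻¹ * (0 - 1)) x :=
    (Real.hasDerivAt_log h1x).comp x ((hasDerivAt_const x 1).sub (hasDerivAt_id x))
  have h3 : HasDerivAt (fun y => (1 / 2) * Real.log (p + q * y ^ 2))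
      ((p + q * x ^ 2)⁻¹ * (0 + q * (2 * x ^ 1)) * (1 / 2)) x := by
    exact (((Real.hasDerivAt_log hpx.ne').comp x
      ((hasDerivAt_const x p).add (((hasDerivAt_pow 2 x)).const_mul q))).const_mul (1/2)).congr_deriv (by ring)
  have := ((h1.sub h2).add h3).sub_const ((1 / 2) * Real.log p)
  refine this.congr_deriv ?_
  have hax : (a * x) ^ 2 = q / p * x ^ 2 := by rw [mul_pow, ha2]
  have key : a * (1 / (1 + (a * x) ^ 2) * a) = q / (p + q * x ^ 2) := by
    have e1 : a * (1 / (1 + (a * x) ^ 2) * a) = a ^ 2 / (1 + q / p * x ^ 2) := by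
      rw [hax]; ring
    rw [e1, ha2]
    rw [div_eq_div_iff (by positivity) hpx.ne']
    field_simp
  rw [key]
  field_simp
  ring

lemma Hbass_contAt (p q : ℝ) (hp : 0 < p) (hq : 0 < q) {x : ℝ} (hx : x < 1) :
    ContinuousAt (Hbass p q) x := by
  have h1x : (1 : ℝ) - x ≠ 0 := by linarith
  have hpx : (0:ℝ) < p + q * x ^ 2 := by positivity
  unfold Hbass
  refine ContinuousAt.sub (ContinuousAt.add (ContinuousAt.sub ?_ ?_) ?_) continuousAt_const
  · exact (Real.continuous_arctan.continuousAt.comp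
      (continuousAt_const.mul continuousAt_id)).const_mul _
  · exact (Real.continuousAt_log h1x).comp (continuousAt_const.sub continuousAt_id)
  · have hcomp : ContinuousAt (fun y : ℝ => Real.log (p + q * y ^ 2)) x :=
      ContinuousAt.comp (f := fun y : ℝ => p + q * y ^ 2) (Real.continuousAt_log hpx.ne') (by fun_prop)
    exact hcomp.const_mul _

lemma Hbass_zero (p q : ℝ) : Hbass p q 0 = 0 := by
  simp [Hbass]

lemma Hbass_mono (p q : ℝ) (hp : 0 < p) (hq : 0 < q) :
    StrictMonoOn (Hbass p q) (Set.Iio 1) := by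
  refine strictMonoOn_of_deriv_pos (convex_Iio 1)
    (fun x hx => (Hbass_contAt p q hp hq hx).continuousWithinAt) (fun x hx => ?_)
  rw [interior_Iio] at hx
  rw [(Hbass_deriv p q hp hq hx).deriv]
  have h1x : (0:ℝ) < 1 - x := by linarith [show x < 1 from hx]
  positivity

lemma Hbass_surj (p q : ℝ) (hp : 0 < p) (hq : 0 < q) {y : ℝ} (hy : 0 ≤ y) :
    ∃ x, 0 ≤ x ∧ x < 1 ∧ Hbass p q x = y := by
  set c : ℝ := 1 - Real.exp (-(y + 1)) with hc
  have hc0 : 0 ≤ c := by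
    have : Real.exp (-(y + 1)) ≤ 1 := Real.exp_le_one_iff.mpr (by linarith)
    rw [hc]; linarith
  have hc1 : c < 1 := by
    have := Real.exp_pos (-(y + 1)); rw [hc]; linarith
  have hHc : y ≤ Hbass p q c := by
    have ha : 0 ≤ Real.sqrt (q / p) := Real.sqrt_nonneg _
    have harc : 0 ≤ Real.arctan (Real.sqrt (q / p) * c) :=
      by rw [← Real.arctan_zero]
         exact Real.arctan_strictMono.monotone (by positivity)
    have hlog : Real.log p ≤ Real.log (p + q * c ^ 2) :=
      Real.log_le_log hp (by nlinarith)
    have hl2 : Real.log (1 - c) = -(y + 1) := by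
      rw [hc]; simp [Real.log_exp]
    unfold Hbass
    rw [hl2]
    nlinarith
  have hcont : ContinuousOn (Hbass p q) (Set.Icc 0 c) := fun x hx =>
    (Hbass_contAt p q hp hq (lt_of_le_of_lt hx.2 hc1)).continuousWithinAt
  have := intermediate_value_Icc hc0 hcont
  have hyI : y ∈ Set.Icc (Hbass p q 0) (Hbass p q c) := by
    rw [Hbass_zero]; exact ⟨hy, hHc⟩
  obtain ⟨x, hxI, hxe⟩ := this hyI
  exact ⟨x, hxI.1, lt_of_le_of_lt hxI.2 hc1, hxe⟩

lemma Hbass_half (p q : ℝ) (hp : 0 < p) (hq : 0 < q) :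
    Hbass p q (1 / 2) = Real.sqrt (q / p) * Real.arctan ((1 / 2) * Real.sqrt (q / p))
      + Real.log (2 * Real.sqrt (1 + q / (4 * p))) := by
  have hX : (0:ℝ) < 1 + q / (4 * p) := by positivity
  have e1 : Real.log (2 * Real.sqrt (1 + q / (4 * p)))
      = Real.log 2 + Real.log (1 + q / (4 * p)) / 2 := by
    rw [Real.log_mul (by norm_num) (Real.sqrt_pos.mpr hX).ne', Real.log_sqrt hX.le]
  have e2 : (1:ℝ) + q / (4 * p) = (p + q * (1 / 2) ^ 2) / p := by
    field_simp; ring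
  have e3 : Real.log (p + q * (1 / 2 : ℝ) ^ 2)
      = Real.log (1 + q / (4 * p)) + Real.log p := by
    rw [e2, Real.log_div (by positivity) hp.ne']; ring
  have hhalf : (1:ℝ) - 1 / 2 = 1 / 2 := by norm_num
  have hl : Real.log (1 / 2 : ℝ) = -Real.log 2 := by
    rw [one_div, Real.log_inv]
  unfold Hbass
  rw [mul_comm (Real.sqrt (q / p)) (1 / 2 : ℝ), hhalf, hl, e1, e3]
  ring

/-- Half-adoption time in the Bass model on an infinite complete 3-body
hypernetwork. -/
theorem stmt14 (p q : ℝ) (hp : 0 < p) (hq : 0 < q)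
    (f : ℝ → ℝ)
    (hode : ∀ t ∈ Set.Ici (0:ℝ),
      HasDerivWithinAt f ((1 - f t) * (p + q * (f t) ^ 2)) (Set.Ici 0) t)
    (h0 : f 0 = 0) :
    ∀ T : ℝ, (0 ≤ T ∧ f T = 1 / 2) ↔
      T = (1 / (p + q)) *
        (Real.sqrt (q / p) * Real.arctan ((1 / 2) * Real.sqrt (q / p))
          + Real.log (2 * Real.sqrt (1 + q / (4 * p)))) := by
  have hpq : (0:ℝ) < p + q := by linarith
  have hfc : ContinuousOn f (Set.Ici 0) := fun t ht => (hode t ht).continuousWithinAt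
  -- Step B: implicit solution as long as f stays below 1
  have stepB : ∀ b : ℝ, 0 ≤ b → (∀ s ∈ Set.Icc (0:ℝ) b, f s < 1) →
      Hbass p q (f b) = (p + q) * b := by
    intro b hb hlt
    have hcont : ContinuousOn (fun t => Hbass p q (f t) - (p + q) * t)
        (Set.Icc 0 b) := by
      refine ContinuousOn.sub ?_ (by fun_prop)
      intro t ht
      exact (Hbass_contAt p q hp hq (hlt t ht)).comp_continuousWithinAt
        ((hfc t ht.1).mono Set.Icc_subset_Ici_self)
    have hderiv : ∀ t ∈ Set.Ico (0:ℝ) b,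
        HasDerivWithinAt (fun t => Hbass p q (f t) - (p + q) * t) 0 (Set.Ici t) t := by
      intro t ht
      have hft : f t < 1 := hlt t ⟨ht.1, ht.2.le⟩
      have hfx : (0:ℝ) < p + q * (f t) ^ 2 := by positivity
      have h1 : HasDerivWithinAt f ((1 - f t) * (p + q * (f t) ^ 2)) (Set.Ici t) t :=
        (hode t ht.1).mono (Set.Ici_subset_Ici.mpr ht.1)
      have h2 := (Hbass_deriv p q hp hq hft).comp_hasDerivWithinAt t h1
      have h3 : HasDerivWithinAt (fun s : ℝ => (p + q) * s) (p + q) (Set.Ici t) t := by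
        simpa using (((hasDerivAt_id t).const_mul (p + q)).hasDerivWithinAt
          (s := Set.Ici t))
      have h4 := h2.sub h3
      refine h4.congr_deriv ?_
      rw [div_mul_cancel₀]
      · ring
      · exact (mul_pos (by linarith) hfx).ne'
    have := constant_of_has_deriv_right_zero hcont hderiv b (Set.right_mem_Icc.mpr hb)
    rw [h0, Hbass_zero] at this
    simp at this
    linarith
  -- Step D: f stays below 1
  have hflt : ∀ t : ℝ, 0 ≤ t → f t < 1 := by
    intro t0 ht0
    by_contra hge
    push_neg at hge
    set S := Set.Icc (0:ℝ) t0 ∩ f ⁻¹' {1} with hSdef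
    have hne : S.Nonempty := by
      have h1m : (1:ℝ) ∈ Set.Icc (f 0) (f t0) := by
        rw [h0]; exact ⟨by norm_num, hge⟩
      obtain ⟨s, hs, hfs⟩ :=
        intermediate_value_Icc ht0 (hfc.mono Set.Icc_subset_Ici_self) h1m
      exact ⟨s, hs, hfs⟩
    have hclosed : IsClosed S :=
      (hfc.mono Set.Icc_subset_Ici_self).preimage_isClosed_of_isClosed
        isClosed_Icc isClosed_singleton
    have hbdd : BddBelow S := ⟨0, fun x hx => hx.1.1⟩
    set t1 := sInf S with ht1def
    have ht1S : t1 ∈ S := hclosed.csInf_mem hne hbdd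
    have ht1f : f t1 = 1 := ht1S.2
    have ht1nn : 0 ≤ t1 := ht1S.1.1
    have ht1pos : 0 < t1 := by
      rcases ht1nn.lt_or_eq with h | h
      · exact h
      · exfalso; rw [← h, h0] at ht1f; norm_num at ht1f
    have hltt1 : ∀ s ∈ Set.Ico (0:ℝ) t1, f s < 1 := by
      intro s hs
      by_contra hge'
      push_neg at hge'
      have h1m : (1:ℝ) ∈ Set.Icc (f 0) (f s) := by
        rw [h0]; exact ⟨by norm_num, hge'⟩
      obtain ⟨s', hs', hfs'⟩ :=
        intermediate_value_Icc hs.1 (hfc.mono Set.Icc_subset_Ici_self) h1m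
      have hs'S : s' ∈ S :=
        ⟨⟨hs'.1, le_trans hs'.2 (le_trans hs.2.le ht1S.1.2)⟩, hfs'⟩
      have := csInf_le hbdd hs'S
      have : t1 ≤ s' := this
      linarith [hs'.2, hs.2]
    obtain ⟨x, hx0, hx1, hxe⟩ :=
      Hbass_surj p q hp hq (y := (p + q) * t1) (by positivity)
    have hfle : ∀ s ∈ Set.Ico (0:ℝ) t1, f s ≤ x := by
      intro s hs
      have hHs : Hbass p q (f s) = (p + q) * s :=
        stepB s hs.1 (fun u hu => hltt1 u ⟨hu.1, lt_of_le_of_lt hu.2 hs.2⟩)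
      by_contra hgt
      push_neg at hgt
      have := (Hbass_mono p q hp hq) (Set.mem_Iio.mpr hx1)
        (Set.mem_Iio.mpr (hltt1 s hs)) hgt
      rw [hHs, hxe] at this
      nlinarith [hs.2]
    have htend : Filter.Tendsto f (nhdsWithin t1 (Set.Ico 0 t1)) (nhds (f t1)) :=
      (hfc t1 ht1nn).mono (fun u hu => hu.1)
    have hnb : (nhdsWithin t1 (Set.Ico 0 t1)).NeBot := by
      apply mem_closure_iff_nhdsWithin_neBot.mp
      rw [closure_Ico ht1pos.ne]
      exact ⟨ht1nn, le_rfl⟩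
    have hle : f t1 ≤ x :=
      le_of_tendsto htend (eventually_mem_nhdsWithin.mono (fun s hs => hfle s hs))
    rw [ht1f] at hle
    linarith
  -- global implicit solution
  have hHft : ∀ t : ℝ, 0 ≤ t → Hbass p q (f t) = (p + q) * t :=
    fun t ht => stepB t ht (fun s hs => hflt s hs.1)
  intro T
  set E := Real.sqrt (q / p) * Real.arctan ((1 / 2) * Real.sqrt (q / p))
    + Real.log (2 * Real.sqrt (1 + q / (4 * p))) with hE
  have hEnn : 0 ≤ E := by
    have h1 : 0 ≤ Real.sqrt (q / p) * Real.arctan ((1 / 2) * Real.sqrt (q / p)) := by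
      have := Real.arctan_strictMono.monotone
        (show (0:ℝ) ≤ (1 / 2) * Real.sqrt (q / p) by positivity)
      rw [Real.arctan_zero] at this
      positivity
    have h2 : 0 ≤ Real.log (2 * Real.sqrt (1 + q / (4 * p))) := by
      apply Real.log_nonneg
      have : (1:ℝ) ≤ Real.sqrt (1 + q / (4 * p)) := by
        have h4 : 0 < q / (4 * p) := by positivity
        have h5 : Real.sqrt 1 ≤ Real.sqrt (1 + q / (4 * p)) :=
          Real.sqrt_le_sqrt (by linarith)
        rwa [Real.sqrt_one] at h5
      linarith
    rw [hE]; linarith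
  constructor
  · rintro ⟨hT, hfT⟩
    have h1 := hHft T hT
    rw [hfT, Hbass_half p q hp hq] at h1
    rw [← hE] at h1
    field_simp
    linarith
  · intro hT
    have hT0 : 0 ≤ T := by
      rw [hT]; exact mul_nonneg (by positivity) hEnn
    refine ⟨hT0, ?_⟩
    have h1 := hHft T hT0
    have h2 : (p + q) * T = Hbass p q (1 / 2) := by
      rw [hT, Hbass_half p q hp hq, ← hE]
      field_simp
    exact (Hbass_mono p q hp hq).injOn (Set.mem_Iio.mpr (hflt T hT0))
      (by norm_num : (1/2:ℝ) ∈ Set.Iio 1) (by rw [h1, h2])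
end

section
/- Let q > 0 and I⁰ ∈ (0, 1/2), and let f solve f' = q f²(1−f), f(0) = I⁰. Then the unique time T with f(T) = 1/2 is T = (1/q)·( log((1−I⁰)/I⁰) + 1/I⁰ − 2 ). -/
open Set

noncomputable def Gfun (x : ℝ) : ℝ := Real.log x - Real.log (1 - x) - 1/x

lemma Gfun_hasDerivAt {x : ℝ} (hx : x ∈ Set.Ioo (0:ℝ) 1) :
    HasDerivAt Gfun (1/x + 1/(1-x) + 1/x^2) x := by
  have hx0 : x ≠ 0 := ne_of_gt hx.1
  have h1x : (1:ℝ) - x ≠ 0 := by have := hx.2; intro h; linarith [h]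
  have h1 : HasDerivAt (fun y : ℝ => Real.log y) x⁻¹ x := Real.hasDerivAt_log hx0
  have h2 : HasDerivAt (fun y : ℝ => Real.log (1 - y)) (-(1-x)⁻¹) x := by
    have hc : HasDerivAt (fun y : ℝ => 1 - y) (-1) x := by
      simpa using (hasDerivAt_id x).const_sub 1
    have := (Real.hasDerivAt_log h1x).comp x hc
    exact this.congr_deriv (by ring)
  have h3 : HasDerivAt (fun y : ℝ => 1/y) (-(x^2)⁻¹) x := by
    simpa [one_div] using hasDerivAt_inv hx0
  have := (h1.sub h2).sub h3
  refine this.congr_deriv ?_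
  field_simp
  ring

lemma Gfun_strictMonoOn : ∀ a ∈ Set.Ioo (0:ℝ) 1, ∀ b ∈ Set.Ioo (0:ℝ) 1,
    a < b → Gfun a < Gfun b := by
  intro a ha b hb hab
  have h1 : Real.log a < Real.log b := Real.log_lt_log ha.1 hab
  have h2 : Real.log (1 - b) < Real.log (1 - a) := by
    apply Real.log_lt_log (by linarith [hb.2]) (by linarith)
  have h3 : 1/b < 1/a := by
    apply one_div_lt_one_div_of_lt ha.1 hab
  unfold Gfun
  linarith

/-- Half-infection time in the SI model on an infinite complete 3-body
hypernetwork. -/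
theorem stmt15 (q I0 : ℝ) (hq : 0 < q) (hI0 : I0 ∈ Set.Ioo (0:ℝ) (1 / 2))
    (f : ℝ → ℝ)
    (hode : ∀ t ∈ Set.Ici (0:ℝ),
      HasDerivWithinAt f (q * (f t) ^ 2 * (1 - f t)) (Set.Ici 0) t)
    (h0 : f 0 = I0) :
    ∀ T : ℝ, (0 ≤ T ∧ f T = 1 / 2) ↔
      T = (1 / q) * (Real.log ((1 - I0) / I0) + 1 / I0 - 2) := by
  have hI0' : I0 ∈ Set.Ioo (0:ℝ) 1 := ⟨hI0.1, by linarith [hI0.2]⟩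
  have hfc : ContinuousOn f (Set.Ici (0:ℝ)) :=
    fun t ht => (hode t ht).continuousWithinAt
  -- constancy on intervals where f stays in (0,1)
  have key : ∀ t : ℝ, 0 ≤ t → (∀ s ∈ Set.Icc (0:ℝ) t, f s ∈ Set.Ioo (0:ℝ) 1) →
      Gfun (f t) = Gfun I0 + q * t := by
    intro t ht hmem
    set H : ℝ → ℝ := fun s => Gfun (f s) - q * s with hH
    have hHcont : ContinuousOn H (Set.Icc 0 t) := by
      apply ContinuousOn.sub _ (by fun_prop)
      intro s hs
      have hfs := hmem s hs
      have hGc : ContinuousAt Gfun (f s) := by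
        have h0' : f s ≠ 0 := ne_of_gt hfs.1
        have h1' : (1:ℝ) - f s ≠ 0 := by have := hfs.2; intro h; linarith
        unfold Gfun
        exact ((Real.continuousAt_log h0').sub
          ((Real.continuousAt_log h1').comp (by fun_prop))).sub
          (continuousAt_const.div continuousAt_id h0')
      exact hGc.comp_continuousWithinAt
        ((hfc.mono (fun x hx => hx.1)) s hs)
    have hHderiv : ∀ s ∈ Set.Ico (0:ℝ) t, HasDerivWithinAt H 0 (Set.Ici s) s := by
      intro s hs
      have hfs := hmem s ⟨hs.1, le_of_lt hs.2⟩
      have hfd : HasDerivWithinAt f (q * (f s) ^ 2 * (1 - f s)) (Set.Ici s) s :=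
        (hode s hs.1).mono (Set.Ici_subset_Ici.2 hs.1)
      have hG := (Gfun_hasDerivAt hfs).comp_hasDerivWithinAt s hfd
      have hlin : HasDerivWithinAt (fun s : ℝ => q * s) q (Set.Ici s) s := by
        simpa using (hasDerivWithinAt_id s (Set.Ici s)).const_mul q
      have := hG.sub hlin
      refine this.congr_deriv ?_
      have h0' : f s ≠ 0 := ne_of_gt hfs.1
      have h1' : (1:ℝ) - f s ≠ 0 := by have := hfs.2; intro h; linarith
      field_simp
      ring
    have := constant_of_has_deriv_right_zero hHcont hHderiv t ⟨ht, le_refl t⟩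
    have h00 : H 0 = Gfun I0 := by simp [hH, h0]
    rw [h00] at this
    have : Gfun (f t) - q * t = Gfun I0 := this
    linarith
  -- invariance: f stays in (0,1)
  have inv : ∀ t : ℝ, 0 ≤ t → f t ∈ Set.Ioo (0:ℝ) 1 := by
    by_contra hbad
    push_neg at hbad
    obtain ⟨t2, ht2, hft2⟩ := hbad
    set B : Set ℝ := Set.Ici 0 ∩ f ⁻¹' (Set.Ioo (0:ℝ) 1)ᶜ with hB
    have hBne : B.Nonempty := ⟨t2, ht2, hft2⟩
    have hBbdd : BddBelow B := ⟨0, fun x hx => hx.1⟩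
    have hBclosed : IsClosed B :=
      hfc.preimage_isClosed_of_isClosed isClosed_Ici isOpen_Ioo.isClosed_compl
    set t1 := sInf B with ht1def
    have ht1B : t1 ∈ B := hBclosed.csInf_mem hBne hBbdd
    have ht1_0 : 0 ≤ t1 := ht1B.1
    have h0notB : (0:ℝ) ∉ B := by
      intro h
      have h2 : f 0 ∉ Set.Ioo (0:ℝ) 1 := h.2
      rw [h0] at h2
      exact h2 hI0'
    have ht1pos : 0 < t1 := lt_of_le_of_ne ht1_0 (fun h => h0notB (h ▸ ht1B))
    have hIco : ∀ s ∈ Set.Ico (0:ℝ) t1, f s ∈ Set.Ioo (0:ℝ) 1 := by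
      intro s hs
      by_contra hc
      exact absurd (csInf_le hBbdd ⟨hs.1, hc⟩) (not_le_of_gt hs.2)
    have hval : ∀ s ∈ Set.Ico (0:ℝ) t1, Gfun (f s) = Gfun I0 + q * s := by
      intro s hs
      exact key s hs.1 (fun u hu => hIco u ⟨hu.1, lt_of_le_of_lt hu.2 hs.2⟩)
    -- f t1 ∈ [0,1]
    have hclos : t1 ∈ closure (Set.Ico (0:ℝ) t1) := by
      rw [closure_Ico (ne_of_lt ht1pos)]
      exact ⟨ht1_0, le_refl _⟩
    have hcw : ContinuousWithinAt f (Set.Ico 0 t1) t1 :=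
      ((hfc t1 ht1_0).mono (fun x hx => hx.1))
    have hft1mem : f t1 ∈ Set.Icc (0:ℝ) 1 := by
      have h1 : f t1 ∈ closure (f '' Set.Ico 0 t1) := hcw.mem_closure_image hclos
      have h2 : closure (f '' Set.Ico 0 t1) ⊆ Set.Icc (0:ℝ) 1 := by
        apply closure_minimal _ isClosed_Icc
        rintro _ ⟨s, hs, rfl⟩
        exact ⟨le_of_lt (hIco s hs).1, le_of_lt (hIco s hs).2⟩
      exact h2 h1
    have hNB : (nhdsWithin t1 (Set.Ico 0 t1)).NeBot :=
      mem_closure_iff_nhdsWithin_neBot.mp hclos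
    have hft1 : f t1 = 0 ∨ f t1 = 1 := by
      obtain ⟨hl, hr⟩ := hft1mem
      by_contra hcon
      push_neg at hcon
      exact ht1B.2 ⟨lt_of_le_of_ne hl (Ne.symm hcon.1), lt_of_le_of_ne hr hcon.2⟩
    rcases hft1 with hft1 | hft1
    · -- f t1 = 0 : contradiction, Gfun → -∞
      set c := max 2 (Real.log 2 - Gfun I0 + 1) with hc
      have hc2 : (2:ℝ) ≤ c := le_max_left _ _
      have hcpos : (0:ℝ) < c := by linarith
      set x0 := 1/c with hx0
      have hx0pos : 0 < x0 := by positivity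
      have hx0half : x0 ≤ 1/2 := by
        rw [hx0]
        apply one_div_le_one_div_of_le (by norm_num) hc2
      have hGx0 : Gfun x0 ≤ Gfun I0 - 1 := by
        have hl1 : Real.log x0 ≤ 0 := Real.log_nonpos (le_of_lt hx0pos) (by linarith)
        have hl2 : -Real.log (1 - x0) ≤ Real.log 2 := by
          have hll : Real.log (1/2) ≤ Real.log (1 - x0) :=
            Real.log_le_log (by norm_num) (by linarith)
          rw [Real.log_div one_ne_zero two_ne_zero, Real.log_one] at hll
          linarith
        have hinv : 1/x0 = c := by rw [hx0]; field_simp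
        have hineq : Gfun x0 ≤ Real.log 2 - c := by
          unfold Gfun; rw [hinv]; linarith
        have hcge : Real.log 2 - Gfun I0 + 1 ≤ c := le_max_right _ _
        linarith
      -- find s with f s < x0
      have hev : ∀ᶠ s in nhdsWithin t1 (Set.Ico 0 t1), f s < x0 :=
        hcw.eventually (eventually_lt_nhds (by rw [hft1]; exact hx0pos))
      obtain ⟨s, hs1, hs2⟩ := (hev.and self_mem_nhdsWithin).exists
      have hfs := hIco s hs2
      have hlt : Gfun (f s) < Gfun x0 :=
        Gfun_strictMonoOn _ hfs _ ⟨hx0pos, by linarith⟩ hs1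
      have := hval s hs2
      linarith [mul_nonneg hq.le hs2.1]
    · -- f t1 = 1 : contradiction, Gfun → +∞
      set M := Gfun I0 + q * t1 with hM
      set c := max 1 (M + 3 + Real.log 2) with hc
      have hc1 : (1:ℝ) ≤ c := le_max_left _ _
      set x0 := 1 - Real.exp (-c) with hx0
      have hexp : Real.exp (-c) ≤ 1/2 := by
        have h1 : Real.exp (-c) ≤ Real.exp (-1) :=
          Real.exp_le_exp.mpr (by linarith)
        have h2 : (2:ℝ) ≤ Real.exp 1 := by
          have := Real.add_one_le_exp (1:ℝ); linarith
        have h3 : Real.exp (-1) ≤ 1/2 := by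
          rw [Real.exp_neg]
          rw [inv_le_comm₀ (Real.exp_pos 1) (by norm_num)]
          linarith
        linarith
      have hx0mem : x0 ∈ Set.Ioo (0:ℝ) 1 := by
        constructor
        · simp only [hx0]; linarith
        · simp only [hx0]; linarith [Real.exp_pos (-c)]
      have hx0half : 1/2 ≤ x0 := by simp only [hx0]; linarith
      have hGx0 : M + 1 ≤ Gfun x0 := by
        have hl1 : Real.log (1/2) ≤ Real.log x0 :=
          Real.log_le_log (by norm_num) hx0half
        rw [Real.log_div one_ne_zero two_ne_zero, Real.log_one] at hl1
        have hl2 : Real.log (1 - x0) = -c := by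
          simp only [hx0]; simp [Real.log_exp]
        have hl3 : 1/x0 ≤ 2 := by
          rw [div_le_iff₀ hx0mem.1]; linarith
        have hcM : M + 3 + Real.log 2 ≤ c := le_max_right _ _
        unfold Gfun
        rw [hl2]
        linarith
      have hev : ∀ᶠ s in nhdsWithin t1 (Set.Ico 0 t1), x0 < f s :=
        hcw.eventually (eventually_gt_nhds (by rw [hft1]; exact hx0mem.2))
      obtain ⟨s, hs1, hs2⟩ := (hev.and self_mem_nhdsWithin).exists
      have hfs := hIco s hs2
      have hlt : Gfun x0 < Gfun (f s) := Gfun_strictMonoOn _ hx0mem _ hfs hs1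
      have := hval s hs2
      have hsle : s ≤ t1 := le_of_lt hs2.2
      linarith [mul_le_mul_of_nonneg_left hsle hq.le]
  -- global identity
  have hid : ∀ t : ℝ, 0 ≤ t → Gfun (f t) = Gfun I0 + q * t := by
    intro t ht
    exact key t ht (fun s hs => inv s hs.1)
  -- algebra
  have hGhalf : Gfun (1/2 : ℝ) = -2 := by
    unfold Gfun; norm_num
  set T0 := (1 / q) * (Real.log ((1 - I0) / I0) + 1 / I0 - 2) with hT0
  have hqT0 : Gfun I0 + q * T0 = -2 := by
    have hI0ne : I0 ≠ 0 := ne_of_gt hI0.1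
    have h1I0ne : (1:ℝ) - I0 ≠ 0 := by have := hI0'.2; intro h; linarith
    have hlog : Real.log ((1 - I0) / I0) = Real.log (1 - I0) - Real.log I0 :=
      Real.log_div h1I0ne hI0ne
    have hqT : q * T0 = Real.log ((1 - I0) / I0) + 1 / I0 - 2 := by
      rw [hT0]; field_simp
    rw [hqT, hlog]
    unfold Gfun
    ring
  have hT0pos : 0 < T0 := by
    have hlt : Gfun I0 < Gfun (1/2 : ℝ) :=
      Gfun_strictMonoOn _ hI0' _ (by norm_num) hI0.2
    rw [hGhalf] at hlt
    have hpos : q * T0 > 0 := by linarith [hqT0]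
    nlinarith
  intro T
  constructor
  · rintro ⟨hT, hfT⟩
    have := hid T hT
    rw [hfT, hGhalf] at this
    have : q * T = q * T0 := by linarith [hqT0]
    have := mul_left_cancel₀ (ne_of_gt hq) this
    rw [this]
  · rintro rfl
    refine ⟨le_of_lt hT0pos, ?_⟩
    have hG : Gfun (f T0) = Gfun (1/2 : ℝ) := by
      rw [hid T0 (le_of_lt hT0pos), hGhalf, hqT0]
    have hmem := inv T0 (le_of_lt hT0pos)
    by_contra hne
    rcases lt_or_gt_of_ne hne with h | h
    · have := Gfun_strictMonoOn _ hmem _ (by norm_num) h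
      linarith [hG]
    · have := Gfun_strictMonoOn _ (by norm_num : (1/2:ℝ) ∈ Set.Ioo (0:ℝ) 1) _ hmem h
      linarith [hG]
end
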